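/- arXiv:2412.04032 — 2 statements merged into one kernel-verified Lean document; each statement's English description precedes it below -/
import Mathlib

section
/- Let N ≥ 2 and N/2 < K < N be integers. The map Φ : (ℤ/Kℤ) × ℰ_{N,K} → (ℤ/Nℤ) × Γ_{K,2K−N} defined by Φ(k,η) = (x_k(η) mod N, σ^{(k,η)}) is a bijection. -/
open scoped Classical BigOperators

noncomputable section

/-- A particle configuration on the discrete circle `ℤ/Mℤ`. -/
abbrev Conf (M : ℕ) := ZMod M → Bool

/-- Number of occupied sites (particles) of a configuration. -/
def numParticles {M : ℕ} [NeZero M] (η : Conf M) : ℕ :=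
  (Finset.univ.filter fun x => η x = true).card

/-- Ergodicity: every pair of neighbouring sites carries at least one particle. -/
def isErgodic {M : ℕ} (η : Conf M) : Prop :=
  ∀ x : ZMod M, η x = true ∨ η (x + 1) = true

/-- The configuration `η` with the values at `x` and `y` exchanged. -/
def swapConf {α : Type*} [DecidableEq α] (η : α → Bool) (x y : α) : α → Bool :=
  fun z => if z = x then η y else if z = y then η x else η z

/-- The representative of `k ∈ ℤ/Kℤ` in `{1, …, K}`. -/
def repOne {K : ℕ} [NeZero K] (k : ZMod K) : ℕ :=
  if k.val = 0 then K else k.val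

/-- `Σ_{y=1}^{x} η_y`, the number of particles among sites `1, …, x`. -/
def countUpTo {N : ℕ} (η : Conf N) (x : ℕ) : ℕ :=
  ∑ y ∈ Finset.Icc 1 x, (if η ((y : ℕ) : ZMod N) = true then 1 else 0)

/-- `x_k(η) ∈ {1, …, N}`: the position of the `k`-th particle of `η`. -/
def pos {N K : ℕ} [NeZero K] (η : Conf N) (k : ZMod K) : ℕ :=
  sInf {x : ℕ | 1 ≤ x ∧ x ≤ N ∧ countUpTo η x = repOne k}

/-- The clockwise distance `d(a,b) ∈ {1, …, M}` from `a` to `b` on `ℤ/Mℤ`. -/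
def cdist {M : ℕ} [NeZero M] (a b : ZMod M) : ℕ :=
  if (b - a).val = 0 then M else (b - a).val

/-- The (integer) value `σ^{(k,η)}_l = 2 − d(x_{k+l−1}(η), x_{k+l}(η))`. -/
def sigmaVal {N K : ℕ} [NeZero N] [NeZero K] (η : Conf N) (k l : ZMod K) : ℤ :=
  2 - (cdist ((pos η (k + l - 1) : ℕ) : ZMod N) ((pos η (k + l) : ℕ) : ZMod N) : ℤ)

/-- The SSEP configuration `σ^{(k,η)}`, occupied at `l` iff `σ^{(k,η)}_l = 1`. -/
def sigmaConf {N K : ℕ} [NeZero N] [NeZero K] (η : Conf N) (k : ZMod K) : Conf K :=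
  fun l => decide (cdist ((pos η (k + l - 1) : ℕ) : ZMod N) ((pos η (k + l) : ℕ) : ZMod N) = 1)

/-!
Label the particles of `η` cyclically by `ℤ/Kℤ`, the label of an occupied site being the number
of particles up to it. Counting up to `x + N` adds exactly `K`, so labels are well defined
modulo `K`, and the next occupied site after particle `k` carries the label `k + 1`. For ergodic
`η` consecutive particles are `1` or `2` sites apart and these `K` gaps add up to `N`, so exactly
`2K − N` of them equal `1`: this is `σ^{(k,η)}`, read from particle `k` on. Conversely, a site
`y` and any `σ ∈ Γ_{K,2K−N}` determine the gap sequence `2 − σ_l`, whose partial sums, placed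
from `y`, give the unique ergodic `η` with `x_k(η) = y` and `σ^{(k,η)} = σ`, where `k` is the
label of `y`.
-/

section Circle

variable {M : ℕ}

lemma natCast_inj_of_lt {a b : ℕ} (ha : a < M) (hb : b < M) (h : (a : ZMod M) = b) : a = b := by
  simpa [ZMod.val_cast_of_lt ha, ZMod.val_cast_of_lt hb] using congrArg ZMod.val h

variable [NeZero M]

lemma one_le_repOne (k : ZMod M) : 1 ≤ repOne k := by
  have := NeZero.pos M
  unfold repOne
  split_ifs <;> omega

lemma repOne_le (k : ZMod M) : repOne k ≤ M := by
  unfold repOne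
  split_ifs
  · exact le_rfl
  · exact (ZMod.val_lt k).le

@[simp]
lemma natCast_repOne (k : ZMod M) : ((repOne k : ℕ) : ZMod M) = k := by
  unfold repOne
  split_ifs with h
  · rw [ZMod.natCast_self, eq_comm, ← ZMod.val_eq_zero, h]
  · exact ZMod.natCast_zmod_val k

lemma repOne_natCast {m : ℕ} (h1 : 1 ≤ m) (h2 : m ≤ M) : repOne (m : ZMod M) = m := by
  unfold repOne
  rw [ZMod.val_natCast]
  rcases h2.lt_or_eq with h | rfl
  · rw [Nat.mod_eq_of_lt h, if_neg (by omega)]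
  · simp

lemma cdist_add_natCast (a : ZMod M) {g : ℕ} (hg : 0 < g) (hgM : g ≤ M) :
    cdist a (a + g) = g := by
  change repOne _ = g
  rw [add_sub_cancel_left]
  exact repOne_natCast hg hgM

lemma sum_range_natCast_add_one {β : Type*} [AddCommMonoid β] (f : ZMod M → β) :
    ∑ i ∈ Finset.range M, f (i + 1) = ∑ l, f l := by
  rw [← Fintype.sum_equiv (Equiv.addRight 1) (fun l => f (l + 1)) f fun _ => rfl]
  refine Finset.sum_nbij' (fun i => (i : ZMod M)) ZMod.val (fun _ _ => Finset.mem_univ _)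
    (fun l _ => Finset.mem_range.2 (ZMod.val_lt l)) (fun i hi => ?_)
    (fun l _ => ZMod.natCast_zmod_val l) fun _ _ => rfl
  exact ZMod.val_cast_of_lt (Finset.mem_range.1 hi)

lemma numParticles_comp_add (σ : Conf M) (c : ZMod M) :
    numParticles (fun l => σ (c + l)) = numParticles σ := by
  simp only [numParticles, Finset.card_filter]
  exact Fintype.sum_equiv (Equiv.addLeft c) _ _ fun _ => rfl

end Circle

section Counting

variable {N : ℕ} (η : Conf N)

@[simp]
lemma countUpTo_zero : countUpTo η 0 = 0 := by
  simp [countUpTo]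

lemma countUpTo_succ (x : ℕ) :
    countUpTo η (x + 1) = countUpTo η x + if η ((x + 1 : ℕ) : ZMod N) = true then 1 else 0 := by
  rw [countUpTo, countUpTo, Finset.sum_Icc_succ_top (by omega)]

lemma countUpTo_mono : Monotone (countUpTo η) :=
  monotone_nat_of_le_succ fun x => by rw [countUpTo_succ]; omega

lemma countUpTo_add_of_forall_false {x s : ℕ}
    (h : ∀ t, 0 < t → t ≤ s → η ((x + t : ℕ) : ZMod N) = false) :
    countUpTo η (x + s) = countUpTo η x := by
  induction s with
  | zero => rfl
  | succ s ih =>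
    have hs := h (s + 1) (by omega) le_rfl
    rw [← add_assoc] at hs ⊢
    rw [countUpTo_succ, hs, ih fun t ht hts => h t ht (by omega)]
    simp

lemma countUpTo_add_of_gap {x g : ℕ} (hg : 0 < g) (hocc : η ((x + g : ℕ) : ZMod N) = true)
    (hfree : ∀ t, 0 < t → t < g → η ((x + t : ℕ) : ZMod N) = false) :
    countUpTo η (x + g) = countUpTo η x + 1 := by
  obtain ⟨s, rfl⟩ : ∃ s, g = s + 1 := ⟨g - 1, by omega⟩
  rw [← add_assoc] at hocc ⊢
  rw [countUpTo_succ, if_pos hocc,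
    countUpTo_add_of_forall_false η fun t ht hts => hfree t ht (by omega)]

lemma exists_countUpTo_eq {m n : ℕ} (h : m ≤ countUpTo η n) : ∃ x ≤ n, countUpTo η x = m := by
  induction n with
  | zero => exact ⟨0, le_rfl, by simp_all⟩
  | succ n ih =>
    by_cases hn : m ≤ countUpTo η n
    · obtain ⟨x, hxn, hx⟩ := ih hn
      exact ⟨x, by omega, hx⟩
    · refine ⟨n + 1, le_rfl, ?_⟩
      rw [countUpTo_succ] at h ⊢
      split_ifs at h ⊢ <;> omega

variable [NeZero N]

lemma countUpTo_self : countUpTo η N = numParticles η := by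
  rw [countUpTo, numParticles, Finset.card_filter]
  refine Finset.sum_nbij' (fun y => (y : ZMod N)) repOne (fun _ _ => Finset.mem_univ _)
    (fun z _ => Finset.mem_Icc.2 ⟨one_le_repOne z, repOne_le z⟩)
    (fun y hy => ?_) (fun z _ => natCast_repOne z) fun _ _ => rfl
  obtain ⟨h1, h2⟩ := Finset.mem_Icc.1 hy
  exact repOne_natCast h1 h2

lemma countUpTo_add_self (x : ℕ) : countUpTo η (x + N) = countUpTo η x + numParticles η := by
  induction x with
  | zero => simp [countUpTo_self]
  | succ x ih =>
    have hcast : ((x + N + 1 : ℕ) : ZMod N) = ((x + 1 : ℕ) : ZMod N) := by simp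
    rw [add_right_comm, countUpTo_succ, ih, hcast, countUpTo_succ]
    omega

lemma countUpTo_add_mul_self (x j : ℕ) :
    countUpTo η (x + N * j) = countUpTo η x + numParticles η * j := by
  induction j with
  | zero => simp
  | succ j ih =>
    rw [mul_add_one, ← add_assoc, countUpTo_add_self, ih, mul_add_one, add_assoc]

variable {K : ℕ} {η} (hη : numParticles η = K)
include hη

lemma natCast_countUpTo_mod (x : ℕ) :
    ((countUpTo η (x % N) : ℕ) : ZMod K) = countUpTo η x := by
  conv_rhs => rw [← Nat.mod_add_div x N, countUpTo_add_mul_self, hη]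
  simp

lemma natCast_countUpTo_eq_of_natCast_eq {a b : ℕ} (h : (a : ZMod N) = b) :
    ((countUpTo η a : ℕ) : ZMod K) = countUpTo η b := by
  rw [← natCast_countUpTo_mod hη, ← natCast_countUpTo_mod hη b,
    (ZMod.natCast_eq_natCast_iff' a b N).1 h]

end Counting

/-- For an occupied site `z`, the index in `ℤ/Kℤ` of the particle sitting at `z`. -/
def label {N : ℕ} [NeZero N] (K : ℕ) (η : Conf N) (z : ZMod N) : ZMod K :=
  (countUpTo η (repOne z) : ZMod K)

section Labels

variable {N K : ℕ} [NeZero N] [NeZero K] {η : Conf N} (hη : numParticles η = K)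
include hη

lemma pos_spec (k : ZMod K) :
    1 ≤ pos η k ∧ pos η k ≤ N ∧ countUpTo η (pos η k) = repOne k := by
  obtain ⟨x, hxN, hx⟩ := exists_countUpTo_eq η (m := repOne k) (n := N)
    (by rw [countUpTo_self, hη]; exact repOne_le k)
  refine Nat.sInf_mem (s := {x | 1 ≤ x ∧ x ≤ N ∧ countUpTo η x = repOne k})
    ⟨x, Nat.pos_of_ne_zero ?_, hxN, hx⟩
  rintro rfl
  have := one_le_repOne k
  simp at hx
  omega

lemma pos_occupied (k : ZMod K) : η (pos η k : ZMod N) = true := by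
  obtain ⟨h1, h2, hc⟩ := pos_spec hη k
  by_contra hfree
  obtain ⟨p, hp⟩ : ∃ p, pos η k = p + 1 := ⟨pos η k - 1, by omega⟩
  rw [hp, countUpTo_succ, if_neg (by rwa [← hp])] at hc
  have hp1 : 1 ≤ p := Nat.pos_of_ne_zero fun hp0 => by
    have := one_le_repOne k
    simp [hp0] at hc
    omega
  have : pos η k ≤ p := Nat.sInf_le ⟨hp1, by omega, by simpa using hc⟩
  omega

lemma pos_eq_of_countUpTo_eq {k : ZMod K} {x : ℕ} (hx1 : 1 ≤ x) (hxN : x ≤ N)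
    (hocc : η (x : ZMod N) = true) (hc : countUpTo η x = repOne k) : pos η k = x := by
  have hle : pos η k ≤ x := Nat.sInf_le ⟨hx1, hxN, hc⟩
  by_contra hne
  obtain ⟨-, -, hpc⟩ := pos_spec hη k
  have hmono := countUpTo_mono η (show pos η k ≤ x - 1 by omega)
  have hstep := countUpTo_succ η (x - 1)
  rw [Nat.sub_add_cancel hx1, if_pos hocc] at hstep
  omega

omit [NeZero K] in
lemma label_natCast (x : ℕ) : label K η x = countUpTo η x :=
  natCast_countUpTo_eq_of_natCast_eq hη (natCast_repOne _)

lemma label_pos (k : ZMod K) : label K η (pos η k) = k := by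
  rw [label_natCast hη, (pos_spec hη k).2.2, natCast_repOne]

lemma pos_label {z : ZMod N} (hz : η z = true) : (pos η (label K η z) : ZMod N) = z := by
  have hx : η (repOne z : ZMod N) = true := by rwa [natCast_repOne]
  have hcount : 1 ≤ countUpTo η (repOne z) ∧ countUpTo η (repOne z) ≤ K := by
    have hstep := countUpTo_succ η (repOne z - 1)
    rw [Nat.sub_add_cancel (one_le_repOne z), if_pos hx] at hstep
    have hmono := countUpTo_mono η (repOne_le z)
    rw [countUpTo_self, hη] at hmono
    omega
  rw [label, pos_eq_of_countUpTo_eq hη (one_le_repOne z) (repOne_le z) hx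
    (repOne_natCast hcount.1 hcount.2).symm, natCast_repOne]

lemma occupied_iff (z : ZMod N) : η z = true ↔ ∃ k : ZMod K, (pos η k : ZMod N) = z :=
  ⟨fun hz => ⟨_, pos_label hη hz⟩, by rintro ⟨k, rfl⟩; exact pos_occupied hη k⟩

omit [NeZero K] in
lemma label_add_of_gap {z : ZMod N} {g : ℕ} (hg : 0 < g) (hocc : η (z + g) = true)
    (hfree : ∀ t : ℕ, 0 < t → t < g → η (z + t) = false) :
    label K η (z + g) = label K η z + 1 := by
  have hz : (z.val : ZMod N) = z := ZMod.natCast_zmod_val z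
  rw [← hz, ← Nat.cast_add, label_natCast hη, label_natCast hη,
    countUpTo_add_of_gap η hg (by rwa [Nat.cast_add, hz]), Nat.cast_succ]
  intro t ht htg
  rw [Nat.cast_add, hz]
  exact hfree t ht htg

lemma pos_add_one_of_gap {k : ZMod K} {g : ℕ} (hg : 0 < g)
    (hocc : η ((pos η k : ZMod N) + g) = true)
    (hfree : ∀ t : ℕ, 0 < t → t < g → η ((pos η k : ZMod N) + t) = false) :
    (pos η (k + 1) : ZMod N) = pos η k + g := by
  rw [← pos_label hη hocc, label_add_of_gap hη hg hocc hfree, label_pos hη]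

end Labels

/-- The gap `d = 2 − σ_l` encoded by an occupation variable `σ_l` of the exclusion process. -/
def gapLength (b : Bool) : ℕ := if b then 1 else 2

lemma one_le_gapLength (b : Bool) : 1 ≤ gapLength b := by
  cases b <;> decide

lemma gapLength_le_two (b : Bool) : gapLength b ≤ 2 := by
  cases b <;> decide

lemma decide_gapLength_eq_one (b : Bool) : decide (gapLength b = 1) = b := by
  cases b <;> rfl

section GapSums

variable {M : ℕ} [NeZero M] (σ : Conf M)

lemma numParticles_le : numParticles σ ≤ M :=
  (Finset.card_filter_le _ _).trans (by simp [ZMod.card])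

lemma sum_gapLength_add_numParticles : ∑ l, gapLength (σ l) + numParticles σ = 2 * M := by
  have hterm : ∀ l, gapLength (σ l) + (if σ l = true then 1 else 0) = 2 := fun l => by
    cases σ l <;> rfl
  rw [numParticles, Finset.card_filter, ← Finset.sum_add_distrib]
  simp only [hterm, Finset.sum_const, Finset.card_univ, ZMod.card, smul_eq_mul, mul_comm]

end GapSums

def neighbourConf {N K : ℕ} [NeZero K] (η : Conf N) : Conf K :=
  fun k => η ((pos η k : ZMod N) + 1)

section Ergodic

variable {N K : ℕ} [NeZero N] [NeZero K] {η : Conf N}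
  (hη : numParticles η = K) (herg : isErgodic η)
include hη herg

lemma pos_add_one_eq (k : ZMod K) :
    (pos η (k + 1) : ZMod N) = pos η k + gapLength (neighbourConf η k) := by
  unfold neighbourConf
  cases hnext : η ((pos η k : ZMod N) + 1)
  · change (pos η (k + 1) : ZMod N) = pos η k + (2 : ℕ)
    have hocc : η ((pos η k : ZMod N) + (2 : ℕ)) = true := by
      have := herg ((pos η k : ZMod N) + 1)
      rw [hnext, add_assoc, one_add_one_eq_two] at this
      simpa using this
    exact pos_add_one_of_gap hη two_pos hocc fun t ht ht2 => by
      obtain rfl : t = 1 := by omega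
      simpa using hnext
  · change (pos η (k + 1) : ZMod N) = pos η k + (1 : ℕ)
    exact pos_add_one_of_gap hη one_pos (by simpa using hnext) fun t ht ht1 => by omega

variable (h2 : K < N)
include h2

lemma cdist_pos_pos_add_one (k : ZMod K) :
    cdist (pos η k : ZMod N) (pos η (k + 1)) = gapLength (neighbourConf η k) := by
  have := NeZero.pos K
  rw [pos_add_one_eq hη herg]
  exact cdist_add_natCast _ (one_le_gapLength _) ((gapLength_le_two _).trans (by omega))

lemma sigmaConf_eq (k : ZMod K) : sigmaConf η k = fun l => neighbourConf η (k - 1 + l) := by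
  funext l
  have hcdist := cdist_pos_pos_add_one hη herg h2 (k + l - 1)
  rw [sub_add_cancel] at hcdist
  unfold sigmaConf
  rw [hcdist, decide_gapLength_eq_one, sub_add_eq_add_sub]

/-- The gaps add up to a multiple of `N`, and to at least `K` and at most `2K < 2N`. -/
lemma sum_gapLength_neighbourConf : ∑ k : ZMod K, gapLength (neighbourConf η k) = N := by
  set S := ∑ k : ZMod K, gapLength (neighbourConf η k)
  have hdvd : N ∣ S := by
    have hgap : ∀ k : ZMod K, ((gapLength (neighbourConf η k) : ℕ) : ZMod N)
        = pos η (k + 1) - pos η k := fun k => by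
      rw [pos_add_one_eq hη herg]
      ring
    rw [← ZMod.natCast_eq_zero_iff, Nat.cast_sum, Finset.sum_congr rfl fun k _ => hgap k,
      Finset.sum_sub_distrib,
      Fintype.sum_equiv (Equiv.addRight 1) (fun k => (pos η (k + 1) : ZMod N))
        (fun k => (pos η k : ZMod N)) fun _ => rfl, sub_self]
  have hsum : S + numParticles (neighbourConf η : Conf K) = 2 * K :=
    sum_gapLength_add_numParticles _
  have hle := numParticles_le (neighbourConf η : Conf K)
  have hK := NeZero.pos K
  obtain ⟨c, hc⟩ := hdvd
  rcases c with _ | _ | c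
  · omega
  · simpa using hc
  · nlinarith

lemma numParticles_neighbourConf : numParticles (neighbourConf η : Conf K) = 2 * K - N := by
  have := sum_gapLength_add_numParticles (neighbourConf η : Conf K)
  rw [sum_gapLength_neighbourConf hη herg h2] at this
  omega

lemma numParticles_sigmaConf (k : ZMod K) : numParticles (sigmaConf η k) = 2 * K - N := by
  rw [sigmaConf_eq hη herg h2, numParticles_comp_add, numParticles_neighbourConf hη herg h2]

end Ergodic

lemma exists_le_lt_succ {f : ℕ → ℕ} {d : ℕ} (h0 : f 0 ≤ d) :
    ∀ {n : ℕ}, d < f n → ∃ a < n, f a ≤ d ∧ d < f (a + 1)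
  | 0, h => absurd h (not_lt.2 h0)
  | n + 1, h => by
    by_cases hn : d < f n
    · obtain ⟨a, ha, hfa⟩ := exists_le_lt_succ h0 hn
      exact ⟨a, by omega, hfa⟩
    · exact ⟨n, by omega, not_lt.1 hn, h⟩

/-- `Σ_{l=1}^{a} (2 − σ_l)`, the distance from particle `k` to particle `k + a` when
`σ = σ^{(k,η)}`. -/
def partialGap {K : ℕ} (σ : Conf K) (a : ℕ) : ℕ :=
  ∑ i ∈ Finset.range a, gapLength (σ (i + 1))

section PartialGap

variable {K : ℕ} {σ : Conf K}

@[simp]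
lemma partialGap_zero : partialGap σ 0 = 0 := by
  simp [partialGap]

lemma partialGap_succ (a : ℕ) : partialGap σ (a + 1) = partialGap σ a + gapLength (σ (a + 1)) :=
  Finset.sum_range_succ _ _

lemma partialGap_strictMono : StrictMono (partialGap σ) :=
  strictMono_nat_of_lt_succ fun a => by
    rw [partialGap_succ]
    have := one_le_gapLength (σ (a + 1))
    omega

end PartialGap

def reconstruct {N K : ℕ} (y : ZMod N) (σ : Conf K) : Conf N :=
  fun z => decide (∃ a < K, z = y + partialGap σ a)

section Reconstruction

variable {N K : ℕ} [NeZero K] {σ : Conf K}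

omit [NeZero K] in
lemma reconstruct_eq_true_iff (y z : ZMod N) :
    reconstruct y σ z = true ↔ ∃ a < K, z = y + partialGap σ a :=
  decide_eq_true_iff

lemma reconstruct_self (y : ZMod N) : reconstruct y σ y = true :=
  (reconstruct_eq_true_iff y y).2 ⟨0, NeZero.pos K, by simp⟩

variable (hσ : numParticles σ = 2 * K - N) (h1 : N < 2 * K)
include hσ h1

lemma partialGap_self : partialGap σ K = N := by
  have hsum := sum_gapLength_add_numParticles σ
  have hreindex : partialGap σ K = ∑ l, gapLength (σ l) :=
    sum_range_natCast_add_one fun l => gapLength (σ l)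
  omega

lemma partialGap_lt {a : ℕ} (ha : a < K) : partialGap σ a < N :=
  partialGap_self hσ h1 ▸ partialGap_strictMono ha

lemma reconstruct_add_partialGap (y : ZMod N) {a : ℕ} (ha : a ≤ K) :
    reconstruct y σ (y + partialGap σ a) = true := by
  rcases ha.lt_or_eq with ha | rfl
  · exact (reconstruct_eq_true_iff _ _).2 ⟨a, ha, rfl⟩
  · simpa [partialGap_self hσ h1] using reconstruct_self y

lemma reconstruct_add_one_eq_false (y : ZMod N) {a : ℕ} (ha : a < K) (hσa : σ (a + 1) = false) :
    reconstruct y σ (y + partialGap σ a + 1) = false := by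
  refine Bool.eq_false_iff.2 fun hocc => ?_
  obtain ⟨b, hb, hab⟩ := (reconstruct_eq_true_iff _ _).1 hocc
  have hsucc : partialGap σ (a + 1) = partialGap σ a + 2 := by
    rw [partialGap_succ, hσa]
    rfl
  have hle : partialGap σ (a + 1) ≤ N := partialGap_self hσ h1 ▸ partialGap_strictMono.monotone ha
  have heq : partialGap σ a + 1 = partialGap σ b :=
    natCast_inj_of_lt (by omega) (partialGap_lt hσ h1 hb) (by push_cast; linear_combination hab)
  rcases le_or_gt b a with hba | hab
  · have := (partialGap_strictMono (σ := σ)).monotone hba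
    omega
  · have := (partialGap_strictMono (σ := σ)).monotone (show a + 1 ≤ b from hab)
    omega

variable [NeZero N]

lemma numParticles_reconstruct (y : ZMod N) : numParticles (reconstruct y σ) = K := by
  have hfilter : Finset.univ.filter (fun z => reconstruct y σ z = true)
      = (Finset.range K).image fun a => y + (partialGap σ a : ZMod N) := by
    ext z
    simp [reconstruct_eq_true_iff, eq_comm (a := z)]
  rw [numParticles, hfilter, Finset.card_image_of_injOn, Finset.card_range]
  intro a ha b hb hab
  simp only [Finset.coe_range, Set.mem_Iio] at ha hb
  exact partialGap_strictMono.injective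
    (natCast_inj_of_lt (partialGap_lt hσ h1 ha) (partialGap_lt hσ h1 hb) (add_left_cancel hab))

/-- Every site lies at most one step before a particle, since the gaps are at most `2`. -/
lemma isErgodic_reconstruct (y : ZMod N) : isErgodic (reconstruct y σ) := by
  intro z
  obtain ⟨a, ha, hle, hlt⟩ := exists_le_lt_succ (f := partialGap σ) (d := (z + 1 - y).val)
    (by simp) (n := K) (by rw [partialGap_self hσ h1]; exact ZMod.val_lt _)
  rw [partialGap_succ] at hlt
  have hg := gapLength_le_two (σ (a + 1))
  have hd : ((z + 1 - y).val : ZMod N) = z + 1 - y := ZMod.natCast_zmod_val _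
  simp only [reconstruct_eq_true_iff]
  obtain hval | hval : (z + 1 - y).val = partialGap σ a ∨ (z + 1 - y).val = partialGap σ a + 1 := by
    omega
  · rw [hval] at hd
    exact Or.inr ⟨a, ha, by linear_combination -hd⟩
  · rw [hval, Nat.cast_succ] at hd
    exact Or.inl ⟨a, ha, by linear_combination -hd⟩

lemma pos_reconstruct (y : ZMod N) {a : ℕ} (ha : a ≤ K) :
    (pos (reconstruct y σ) (label K (reconstruct y σ) y + (a : ZMod K)) : ZMod N) =
      y + partialGap σ a := by
  have hR := numParticles_reconstruct hσ h1 y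
  induction a with
  | zero => simpa using pos_label hR (reconstruct_self y)
  | succ a ih =>
    replace ih := ih (by omega)
    have hocc : reconstruct y σ (y + partialGap σ a + gapLength (σ (a + 1))) = true := by
      rw [add_assoc, ← Nat.cast_add, ← partialGap_succ]
      exact reconstruct_add_partialGap hσ h1 y ha
    have hfree : ∀ t : ℕ, 0 < t → t < gapLength (σ (a + 1)) →
        reconstruct y σ (y + partialGap σ a + t) = false := by
      cases hσa : σ (a + 1)
      · intro t ht ht2
        obtain rfl : t = 1 := by change t < 2 at ht2; omega
        simpa using reconstruct_add_one_eq_false hσ h1 y ha hσa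
      · intro t ht ht1
        change t < 1 at ht1
        omega
    rw [Nat.cast_succ, ← add_assoc, pos_add_one_of_gap hR (one_le_gapLength _) (by rwa [ih])
      (by rwa [ih]), ih, partialGap_succ, Nat.cast_add, add_assoc]

lemma sigmaConf_reconstruct (h2 : K < N) (y : ZMod N) :
    sigmaConf (reconstruct y σ) (label K (reconstruct y σ) y) = σ := by
  funext l
  obtain ⟨a, ha, rfl⟩ : ∃ a < K, (a : ZMod K) + 1 = l := ⟨(l - 1).val, ZMod.val_lt _, by simp⟩
  have hN : 2 ≤ N := by have := NeZero.pos K; omega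
  set k := label K (reconstruct y σ) y
  have hidx : k + ((a : ZMod K) + 1) = k + ((a + 1 : ℕ) : ZMod K) := by push_cast; rfl
  unfold sigmaConf
  rw [add_sub_assoc, add_sub_cancel_right, hidx, pos_reconstruct hσ h1 y ha.le,
    pos_reconstruct hσ h1 y ha, partialGap_succ, Nat.cast_add, ← add_assoc,
    cdist_add_natCast _ (one_le_gapLength _) ((gapLength_le_two _).trans hN),
    decide_gapLength_eq_one]

end Reconstruction

section LeftInverse

variable {N K : ℕ} [NeZero N] [NeZero K] {η : Conf N}
  (hη : numParticles η = K) (herg : isErgodic η) (h2 : K < N)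
include hη herg h2

lemma pos_add_natCast (k : ZMod K) (a : ℕ) :
    (pos η (k + (a : ZMod K)) : ZMod N) = pos η k + partialGap (sigmaConf η k) a := by
  induction a with
  | zero => simp
  | succ a ih =>
    have hσ : sigmaConf η k (a + 1) = neighbourConf η (k + (a : ZMod K)) := by
      rw [sigmaConf_eq hη herg h2]
      exact congrArg _ (by ring)
    rw [Nat.cast_succ, ← add_assoc, pos_add_one_eq hη herg, ih, partialGap_succ, hσ,
      Nat.cast_add, add_assoc]

lemma reconstruct_pos_sigmaConf (k : ZMod K) : reconstruct (pos η k) (sigmaConf η k) = η := by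
  funext z
  rw [Bool.eq_iff_iff, reconstruct_eq_true_iff, occupied_iff hη]
  constructor
  · rintro ⟨a, -, rfl⟩
    exact ⟨k + a, pos_add_natCast hη herg h2 k a⟩
  · rintro ⟨j, rfl⟩
    refine ⟨(j - k).val, ZMod.val_lt _, ?_⟩
    rw [← pos_add_natCast hη herg h2, ZMod.natCast_zmod_val, add_sub_cancel]

end LeftInverse

theorem fep_static_mapping_bijective_general
    (N K : ℕ) [NeZero N] [NeZero K] (h1 : N < 2 * K) (h2 : K < N) :
    Set.BijOn
      (fun p : ZMod K × Conf N => (((pos p.2 p.1 : ℕ) : ZMod N), sigmaConf p.2 p.1))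
      ((Set.univ : Set (ZMod K)) ×ˢ {η : Conf N | numParticles η = K ∧ isErgodic η})
      ((Set.univ : Set (ZMod N)) ×ˢ {σ : Conf K | numParticles σ = 2 * K - N}) := by
  refine Set.InvOn.bijOn
    (f' := fun q => (label K (reconstruct q.1 q.2) q.1, reconstruct q.1 q.2)) ⟨?_, ?_⟩ ?_ ?_
  · rintro ⟨k, η⟩ ⟨-, hη, herg⟩
    simp only [reconstruct_pos_sigmaConf hη herg h2, label_pos hη]
  · rintro ⟨y, σ⟩ ⟨-, hσ⟩
    exact Prod.ext (pos_label (numParticles_reconstruct hσ h1 y) (reconstruct_self y))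
      (sigmaConf_reconstruct hσ h1 h2 y)
  · rintro ⟨k, η⟩ ⟨-, hη, herg⟩
    exact ⟨trivial, numParticles_sigmaConf hη herg h2 k⟩
  · rintro ⟨y, σ⟩ ⟨-, hσ⟩
    exact ⟨trivial, numParticles_reconstruct hσ h1 y, isErgodic_reconstruct hσ h1 y⟩

/-- **The static mapping is bijective.**  For `N ≥ 2` and `N/2 < K < N`, the map
`Φ(k,η) = (x_k(η) mod N, σ^{(k,η)})` is a bijection from `(ℤ/Kℤ) × ℰ_{N,K}` onto
`(ℤ/Nℤ) × Γ_{K,2K−N}`. -/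
theorem fep_static_mapping_bijective
    (N K : ℕ) [NeZero N] [NeZero K] (hN : 2 ≤ N) (h1 : N < 2 * K) (h2 : K < N) :
    Set.BijOn
      (fun p : ZMod K × Conf N => (((pos p.2 p.1 : ℕ) : ZMod N), sigmaConf p.2 p.1))
      ((Set.univ : Set (ZMod K)) ×ˢ {η : Conf N | numParticles η = K ∧ isErgodic η})
      ((Set.univ : Set (ZMod N)) ×ˢ {σ : Conf K | numParticles σ = 2 * K - N}) :=
  fep_static_mapping_bijective_general N K h1 h2

end
end

section
/- Let N ≥ 2 and N/2 < K < N be integers, and let Q be the FEP generator matrix on Γ_{N,K}. The uniform probability measure π_{N,K} on ℰ_{N,K}, extended by 0 on Γ_{N,K} ∖ ℰ_{N,K} and viewed as a row vector, satisfies π_{N,K} · Q = 0; that is, for every η' ∈ Γ_{N,K}, Σ_{η ∈ Γ_{N,K}} π_{N,K}(η) Q(η,η') = 0. -/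
open scoped Classical BigOperators

noncomputable section

/-- Number of pairs `(x, z)`, `z ∈ {−1, +1}`, with `η_{x−z} = η_x = 1`, `η_{x+z} = 0` and
`η^{x,x+z} = η'`. -/
def jumpCount {N : ℕ} [NeZero N] (η η' : Conf N) : ℕ :=
  (Finset.univ.filter fun p : ZMod N × Bool =>
    letI x := p.1
    letI z : ZMod N := if p.2 then 1 else -1
    η (x - z) = true ∧ η x = true ∧ η (x + z) = false ∧ swapConf η x (x + z) = η').card

/-- The configurations with exactly `K` particles, as a type. -/
abbrev GammaT (N K : ℕ) [NeZero N] := {η : Conf N // numParticles η = K}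

/-- The FEP generator, as a matrix indexed by `Γ_{N,K}`. -/
def genFEP (N K : ℕ) [NeZero N] : Matrix (GammaT N K) (GammaT N K) ℝ :=
  fun η η' =>
    if η' = η then -(∑ η'' ∈ Finset.univ.filter (fun η'' => η'' ≠ η), (jumpCount η.1 η''.1 : ℝ))
    else (jumpCount η.1 η'.1 : ℝ)

/-- The distribution at time `t` of the FEP started from `η`:  the row `η` of `exp (t Q)`. -/
def Pt (N K : ℕ) [NeZero N] (t : ℝ) (η : GammaT N K) : GammaT N K → ℝ :=
  fun η' => NormedSpace.exp (t • genFEP N K) η η'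

/-- Total variation distance between two (probability) vectors on a finite set. -/
def dTV {S : Type*} [Fintype S] (p q : S → ℝ) : ℝ :=
  (∑ s, |p s - q s|) / 2

/-- The ergodic configurations with `K` particles, as a finset. -/
def ergoFinset (N K : ℕ) [NeZero N] : Finset (GammaT N K) :=
  Finset.univ.filter fun η => isErgodic η.1

/-- The uniform probability measure on `ℰ_{N,K}`, extended by `0`. -/
def piFEP (N K : ℕ) [NeZero N] : GammaT N K → ℝ :=
  fun η => if isErgodic η.1 then (1 : ℝ) / (ergoFinset N K).card else 0

/-- The `ε`-mixing time of the FEP on `ℤ/Nℤ` with `K` particles. -/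
def mixingTime (N K : ℕ) (ε : ℝ) : ℝ :=
  if h : N = 0 then 0 else
    haveI : NeZero N := ⟨h⟩
    sInf {t : ℝ | 0 ≤ t ∧ ∀ η : GammaT N K, dTV (Pt N K t η) (piFEP N K) ≤ ε}

/-- The `ε`-mixing time restricted to initial configurations in the ergodic component. -/
def ergoMixingTime (N K : ℕ) (ε : ℝ) : ℝ :=
  if h : N = 0 then 0 else
    haveI : NeZero N := ⟨h⟩
    sInf {t : ℝ | 0 ≤ t ∧ ∀ η : GammaT N K, isErgodic η.1 → dTV (Pt N K t η) (piFEP N K) ≤ ε}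

/-- The `ε`-transience time: the time needed for the mass of the transient set to drop
below `ε`, uniformly over the initial configuration. -/
def transienceTime (N K : ℕ) (ε : ℝ) : ℝ :=
  if h : N = 0 then 0 else
    haveI : NeZero N := ⟨h⟩
    sInf {t : ℝ | 0 ≤ t ∧ ∀ η : GammaT N K,
      ∑ η' ∈ Finset.univ.filter (fun η' : GammaT N K => ¬ isErgodic η'.1), Pt N K t η η' ≤ ε}

end

/-!
A jump out of an ergodic configuration keeps it ergodic, and between ergodic configurations every
jump of a particle from `x` to `x + z` is undone by the jump from `x + z` back to `x`, which is
legal because the site `x + 2z` neighbours the empty site `x + z`. So `Q` is symmetric on the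
closed class `ℰ_{N,K}`, whence the uniform measure on it is invariant.
-/

/-- A uniform measure on a closed class of states on which the rates are symmetric is invariant. -/
theorem Matrix.sum_apply_eq_zero_of_symm_on_closed {S R : Type*} [Fintype S] [AddCommMonoid R]
    (Q : Matrix S S R) (hrow : ∀ i, ∑ j, Q i j = 0) (E : Finset S)
    (hclosed : ∀ i ∈ E, ∀ j ∉ E, Q i j = 0) (hsymm : ∀ i ∈ E, ∀ j ∈ E, Q i j = Q j i) (j : S) :
    ∑ i ∈ E, Q i j = 0 := by
  by_cases hj : j ∈ E
  · calc ∑ i ∈ E, Q i j = ∑ i ∈ E, Q j i := Finset.sum_congr rfl fun i hi => hsymm i hi j hj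
      _ = ∑ i, Q j i := Finset.sum_subset (Finset.subset_univ E) fun i _ hi => hclosed j hj i hi
      _ = 0 := hrow j
  · exact Finset.sum_eq_zero fun i hi => hclosed i hi j hj

def IsJump {M : ℕ} (η ν : Conf M) (x z : ZMod M) : Prop :=
  η (x - z) = true ∧ η x = true ∧ η (x + z) = false ∧ swapConf η x (x + z) = ν

def jumpDir {M : ℕ} (b : Bool) : ZMod M := if b then 1 else -1

lemma jumpDir_eq_one_or_neg_one {M : ℕ} (b : Bool) :
    (jumpDir b : ZMod M) = 1 ∨ (jumpDir b : ZMod M) = -1 := by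
  cases b <;> simp [jumpDir]

lemma jumpDir_not {M : ℕ} (b : Bool) : (jumpDir (!b) : ZMod M) = -jumpDir b := by
  cases b <;> simp [jumpDir]

lemma jumpCount_eq_card_isJump {N : ℕ} [NeZero N] (η ν : Conf N) :
    jumpCount η ν =
      (Finset.univ.filter fun p : ZMod N × Bool => IsJump η ν p.1 (jumpDir p.2)).card := by
  unfold jumpCount IsJump jumpDir
  congr

lemma swapConf_comm {α : Type*} [DecidableEq α] (η : α → Bool) (x y : α) :
    swapConf η x y = swapConf η y x := by
  funext w
  unfold swapConf
  split_ifs <;> simp_all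

lemma swapConf_swapConf {α : Type*} [DecidableEq α] (η : α → Bool) (x y : α) :
    swapConf (swapConf η x y) x y = η := by
  funext w
  unfold swapConf
  split_ifs <;> simp_all

namespace IsJump

variable {M : ℕ} {η ν : Conf M} {x z : ZMod M}

lemma target_ne_source (h : IsJump η ν x z) : x + z ≠ x := fun hx => by
  simpa [hx, h.2.1] using h.2.2.1

lemma behind_ne_source (h : IsJump η ν x z) : x - z ≠ x := fun hx =>
  h.target_ne_source (by linear_combination -hx)

lemma behind_ne_target (h : IsJump η ν x z) : x - z ≠ x + z := fun hx => by
  simpa [hx, h.2.2.1] using h.1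

lemma apply_source (h : IsJump η ν x z) : ν x = false := by
  rw [← h.2.2.2]; simp [swapConf, h.2.2.1]

lemma apply_target (h : IsJump η ν x z) : ν (x + z) = true := by
  rw [← h.2.2.2]; simp [swapConf, h.target_ne_source, h.2.1]

lemma apply_of_ne (h : IsJump η ν x z) {w : ZMod M} (hwx : w ≠ x) (hwt : w ≠ x + z) :
    ν w = η w := by
  rw [← h.2.2.2]; simp [swapConf, hwx, hwt]

lemma apply_behind (h : IsJump η ν x z) : ν (x - z) = true := by
  rw [h.apply_of_ne h.behind_ne_source h.behind_ne_target, h.1]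

-- Only the site `x` loses its particle, and both its neighbours are occupied afterwards.
lemma isErgodic (h : IsJump η ν x z) (hz : z = 1 ∨ z = -1) (he : _root_.isErgodic η) :
    isErgodic ν := by
  have hnbr : ∀ w, (w = x + z ∨ w = x - z) → ν w = true := by
    rintro w (rfl | rfl)
    exacts [h.apply_target, h.apply_behind]
  have hmono : ∀ w, w ≠ x → η w = true → ν w = true := fun w hwx hw => by
    by_cases hwt : w = x + z
    · exact hwt ▸ h.apply_target
    · rwa [h.apply_of_ne hwx hwt]
  intro w
  by_cases hwx : w = x
  · subst hwx
    exact Or.inr (hnbr _ (by rcases hz with rfl | rfl <;> [left; right] <;> ring))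
  by_cases hwx' : w + 1 = x
  · subst hwx'
    exact Or.inl (hnbr _ (by rcases hz with rfl | rfl <;> [right; left] <;> ring))
  exact (he w).imp (hmono w hwx) (hmono (w + 1) hwx')

lemma reverse (h : IsJump η ν x z) (hz : z = 1 ∨ z = -1) (he : _root_.isErgodic η) :
    IsJump ν η (x + z) (-z) := by
  have hbeyond : η (x + z + z) = true := by
    rcases hz with rfl | rfl
    · simpa [h.2.2.1] using he (x + 1)
    · simpa [h.2.2.1, add_assoc, show (-1 : ZMod M) + -1 + 1 = -1 by ring] using he (x + -1 + -1)
  have hbeyond_ne_source : x + z + z ≠ x := fun hx =>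
    h.behind_ne_target (by linear_combination -hx)
  have hbeyond_ne_target : x + z + z ≠ x + z := fun hx =>
    h.target_ne_source (by linear_combination hx)
  refine ⟨?_, h.apply_target, ?_, ?_⟩
  · rw [sub_neg_eq_add, h.apply_of_ne hbeyond_ne_source hbeyond_ne_target, hbeyond]
  · rw [add_neg_cancel_right, h.apply_source]
  · rw [add_neg_cancel_right, ← h.2.2.2, swapConf_comm, swapConf_swapConf]

end IsJump

section Ergodic

variable {N : ℕ} [NeZero N] {η ν : Conf N}

lemma jumpCount_eq_zero_of_isErgodic (he : isErgodic η) (hν : ¬ isErgodic ν) :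
    jumpCount η ν = 0 := by
  rw [jumpCount_eq_card_isJump, Finset.card_eq_zero, Finset.filter_eq_empty_iff]
  rintro ⟨x, b⟩ - hjump
  exact hν (hjump.isErgodic (jumpDir_eq_one_or_neg_one b) he)

lemma jumpCount_le_jumpCount_swap_of_isErgodic (he : isErgodic η) :
    jumpCount η ν ≤ jumpCount ν η := by
  rw [jumpCount_eq_card_isJump, jumpCount_eq_card_isJump]
  refine Finset.card_le_card_of_injOn (fun p => (p.1 + jumpDir p.2, !p.2)) ?_ ?_
  · rintro ⟨x, b⟩ hp
    simp only [Finset.coe_filter, Finset.mem_univ, true_and, Set.mem_ofPred_eq] at hp ⊢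
    rw [jumpDir_not]
    exact IsJump.reverse hp (jumpDir_eq_one_or_neg_one b) he
  · rintro ⟨x, b⟩ - ⟨x', b'⟩ - hpp
    simp only [Prod.mk.injEq, Bool.not_inj_iff] at hpp
    obtain ⟨hx, rfl⟩ := hpp
    rw [add_right_cancel hx]

lemma jumpCount_comm_of_isErgodic (he : isErgodic η) (hν : isErgodic ν) :
    jumpCount η ν = jumpCount ν η :=
  (jumpCount_le_jumpCount_swap_of_isErgodic he).antisymm
    (jumpCount_le_jumpCount_swap_of_isErgodic hν)

end Ergodic

section Generator

variable {N K : ℕ} [NeZero N]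

lemma genFEP_apply_of_ne {η η' : GammaT N K} (h : η ≠ η') :
    genFEP N K η η' = jumpCount η.1 η'.1 := by
  simp [genFEP, Ne.symm h]

lemma genFEP_sum_row (η : GammaT N K) : ∑ η', genFEP N K η η' = 0 := by
  rw [← Finset.add_sum_erase _ _ (Finset.mem_univ η), Finset.sum_congr rfl
    fun η' hη' => genFEP_apply_of_ne (Finset.ne_of_mem_erase hη').symm]
  simp [genFEP, Finset.filter_ne']

lemma genFEP_eq_zero_of_isErgodic {η ν : GammaT N K} (he : isErgodic η.1)
    (hν : ¬ isErgodic ν.1) :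
    genFEP N K η ν = 0 := by
  rw [genFEP_apply_of_ne (by rintro rfl; exact hν he), jumpCount_eq_zero_of_isErgodic he hν,
    Nat.cast_zero]

lemma genFEP_comm_of_isErgodic {η ν : GammaT N K} (he : isErgodic η.1) (hν : isErgodic ν.1) :
    genFEP N K η ν = genFEP N K ν η := by
  rcases eq_or_ne η ν with rfl | hne
  · rfl
  rw [genFEP_apply_of_ne hne, genFEP_apply_of_ne hne.symm, jumpCount_comm_of_isErgodic he hν]

lemma mem_ergoFinset {η : GammaT N K} : η ∈ ergoFinset N K ↔ isErgodic η.1 := by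
  simp [ergoFinset]

lemma sum_piFEP_mul (f : GammaT N K → ℝ) :
    ∑ η, piFEP N K η * f η = 1 / ((ergoFinset N K).card : ℝ) * ∑ η ∈ ergoFinset N K, f η := by
  rw [Finset.mul_sum, ergoFinset, Finset.sum_filter]
  refine Finset.sum_congr rfl fun η _ => ?_
  unfold piFEP
  split_ifs <;> simp [ergoFinset]

end Generator

theorem fep_uniform_ergodic_invariant_general
    (N K : ℕ) [NeZero N]
    (η' : GammaT N K) :
    ∑ η : GammaT N K, piFEP N K η * genFEP N K η η' = 0 := by
  rw [sum_piFEP_mul, (genFEP N K).sum_apply_eq_zero_of_symm_on_closed genFEP_sum_row _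
    (fun _ hη _ hν => genFEP_eq_zero_of_isErgodic (mem_ergoFinset.1 hη) (mt mem_ergoFinset.2 hν))
    (fun _ hη _ hν => genFEP_comm_of_isErgodic (mem_ergoFinset.1 hη) (mem_ergoFinset.1 hν)),
    mul_zero]

/-- **The uniform measure on the ergodic component is invariant for the FEP.**
For `N ≥ 2` and `N/2 < K < N`, the uniform probability measure on `ℰ_{N,K}`, extended by `0`
on `Γ_{N,K} ∖ ℰ_{N,K}`, is a left null vector of the generator `Q`:  for every `η'`,
`Σ_η π_{N,K}(η) Q(η,η') = 0`. -/
theorem fep_uniform_ergodic_invariant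
    (N K : ℕ) [NeZero N] (hN : 2 ≤ N) (h1 : N < 2 * K) (h2 : K < N)
    (η' : GammaT N K) :
    ∑ η : GammaT N K, piFEP N K η * genFEP N K η η' = 0 :=
  fep_uniform_ergodic_invariant_general N K η'
end
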